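/- arXiv:2401.12701 — 3 statements merged into one kernel-verified Lean document; each statement's English description precedes it below -/
import Mathlib

section
/- Let A(x) := Σ_{n≥0} (−1)^n · p^{n²}·y^{2n}/(p;p)_n · x^n ∈ ℚ(p,y)[[x]], and let B(x) := A(x) − p·x·y·A(p·x). Since B has constant coefficient 1, define G(x) := A(p·x)/B(x). Then G satisfies the functional equation G(x) · (1 − p·x·y − p·x·y·(−p + y + p²·x·y)·G(p·x)) = 1 + p²·x·y·G(p·x), where for a scalar c ∈ ℚ(p,y), F(c·x) denotes the series whose n-th coefficient is c^n times that of F. -/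
/-!
The coefficient recurrence `c (n + 1) * (1 - p ^ (n + 1)) = -p ^ (2 * n + 1) * y ^ 2 * c n`
of `A` says that `A(x) = A(p x) - p y² x A(p² x)`. With `a = A(p x)` and `a₂ = A(p² x)` this
makes both `B(x) = a - p y x a - p y² x a₂` and `B(p x) = a - p² y x a₂` linear in `a, a₂`;
since `G(x) B(x) = a` and `G(p x) B(p x) = a₂`, multiplying the functional equation by
`B(x) B(p x)` turns it into a polynomial identity in `a, a₂`.
-/

/-- The field `ℚ(p,y)`, realized as rational functions in `y` over `ℚ(p)`. -/
abbrev K2 : Type := RatFunc (RatFunc ℚ)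

/-- The variable `p` of `ℚ(p,y)`. -/
noncomputable def pv : K2 := RatFunc.C RatFunc.X

/-- The variable `y` of `ℚ(p,y)`. -/
noncomputable def yv : K2 := RatFunc.X

/-- `A(x) = Σ_{n≥0} (-1)^n p^{n²} y^{2n} / (p;p)_n · x^n ∈ ℚ(p,y)[[x]]`. -/
noncomputable def Aser : PowerSeries K2 :=
  PowerSeries.mk fun n =>
    (-1 : K2) ^ n * pv ^ (n ^ 2) * yv ^ (2 * n) /
      ∏ i ∈ Finset.range n, (1 - pv ^ (i + 1))

/-- `B(x) = A(x) - p·x·y·A(p·x)`. -/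
noncomputable def Bser : PowerSeries K2 :=
  Aser - PowerSeries.C (R := K2) (pv * yv) * PowerSeries.X * PowerSeries.rescale pv Aser

/-- `G(x) = A(p·x)/B(x)` (the inverse exists since `B` has constant coefficient `1`). -/
noncomputable def Gsym : PowerSeries K2 :=
  PowerSeries.rescale pv Aser * Bser⁻¹

namespace PowerSeries

theorem rescale_C {R : Type*} [CommSemiring R] (a r : R) : rescale a (C r) = C r := by
  ext (_ | n) <;> simp [coeff_rescale, coeff_C]

theorem constantCoeff_rescale {R : Type*} [CommSemiring R] (a : R) (f : R⟦X⟧) :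
    constantCoeff (rescale a f) = constantCoeff f := by
  rw [← coeff_zero_eq_constantCoeff_apply, coeff_rescale, pow_zero, one_mul,
    coeff_zero_eq_constantCoeff_apply]

end PowerSeries

open PowerSeries

noncomputable def rogersRamanujanSeries {K : Type*} [Field K] (q z : K) : K⟦X⟧ :=
  mk fun n => (-1) ^ n * q ^ (n ^ 2) * z ^ n / ∏ i ∈ Finset.range n, (1 - q ^ (i + 1))

theorem rogersRamanujanSeries_eq_rescale_sub {K : Type*} [Field K] {q : K}
    (hq : ∀ n : ℕ, q ^ (n + 1) ≠ 1) (z : K) :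
    rogersRamanujanSeries q z =
      rescale q (rogersRamanujanSeries q z) -
        C (q * z) * X * rescale (q ^ 2) (rogersRamanujanSeries q z) := by
  have hpoch (n : ℕ) : ∏ i ∈ Finset.range n, (1 - q ^ (i + 1)) ≠ 0 :=
    Finset.prod_ne_zero_iff.mpr fun i _ => sub_ne_zero.mpr (hq i).symm
  ext (_ | n)
  · simp only [rogersRamanujanSeries, map_sub, coeff_rescale, coeff_mk, mul_assoc, coeff_C_mul,
      coeff_zero_X_mul]
    simp
  · have hsq : (n + 1) ^ 2 = n ^ 2 + 2 * n + 1 := by ring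
    simp only [rogersRamanujanSeries, map_sub, coeff_rescale, coeff_mk, mul_assoc, coeff_C_mul,
      coeff_succ_X_mul, Finset.prod_range_succ, hsq]
    field_simp [hpoch n, sub_ne_zero.mpr (hq n).symm]
    ring

theorem constantCoeff_rogersRamanujanSeries {K : Type*} [Field K] (q z : K) :
    constantCoeff (rogersRamanujanSeries q z) = 1 := by
  simp [rogersRamanujanSeries, ← coeff_zero_eq_constantCoeff_apply]

theorem pv_pow_succ_ne_one (n : ℕ) : pv ^ (n + 1) ≠ 1 := by
  rw [pv, ← map_pow, ← map_one RatFunc.C, Ne, RatFunc.C_injective.eq_iff,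
    ← RatFunc.algebraMap_X, ← map_pow, ← map_one (algebraMap (Polynomial ℚ) (RatFunc ℚ)),
    (RatFunc.algebraMap_injective ℚ).eq_iff]
  intro h
  simpa using congrArg Polynomial.natDegree h

theorem Aser_eq_rogersRamanujanSeries : Aser = rogersRamanujanSeries pv (yv ^ 2) := by
  ext n
  simp [Aser, rogersRamanujanSeries, pow_mul]

theorem functional_equation_of_qDifference {K : Type*} [Field K] {q y : K} {A B G : K⟦X⟧}
    (hA : A = rescale q A - C (q * y ^ 2) * X * rescale (q ^ 2) A)
    (hB : B = A - C (q * y) * X * rescale q A) (hB0 : constantCoeff B ≠ 0)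
    (hG : G * B = rescale q A) :
    G * (1 - C (q * y) * X - C (q * y) * X * (C (-q) + C y + C (q ^ 2 * y) * X) * rescale q G) =
      1 + C (q ^ 2 * y) * X * rescale q G := by
  have hG' : rescale q G * rescale q B = rescale (q ^ 2) A := by
    rw [← map_mul, hG, rescale_rescale, sq]
  have hB' : rescale q B = rescale q A - C (q ^ 2 * y) * X * rescale (q ^ 2) A := by
    rw [hB, map_sub, map_mul, map_mul, rescale_X, rescale_rescale, rescale_C, ← sq]
    simp only [map_mul, map_pow]
    ring
  have hBB' : B * rescale q B ≠ 0 := by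
    refine mul_ne_zero (fun h => hB0 (by rw [h, map_zero])) fun h => hB0 ?_
    rw [← constantCoeff_rescale q, h, map_zero]
  apply mul_right_cancel₀ hBB'
  simp only [map_mul, map_neg, map_pow] at *
  set P := C q
  set Y := C y
  set a := rescale q A
  set a₂ := rescale (q ^ 2) A
  linear_combination
    rescale q B * (1 - P * Y * X - P * Y * X * (-P + Y + P ^ 2 * Y * X) * rescale q G) * hG
    - (P * Y * X * (-P + Y + P ^ 2 * Y * X) * a + P ^ 2 * Y * X * B) * hG'
    - (rescale q B + P ^ 2 * Y * X * a₂) * hB + (a - A) * hB' - a * hA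

theorem constantCoeff_Bser : constantCoeff Bser = 1 := by
  simp [Bser, Aser_eq_rogersRamanujanSeries, constantCoeff_rogersRamanujanSeries]

/-- the functional equation
`G(x)·(1 - p·x·y - p·x·y·(-p + y + p²·x·y)·G(p·x)) = 1 + p²·x·y·G(p·x)`. -/
theorem stmt_11 :
    Gsym * (1 - PowerSeries.C (R := K2) (pv * yv) * PowerSeries.X -
        PowerSeries.C (R := K2) (pv * yv) * PowerSeries.X *
          (PowerSeries.C (R := K2) (-pv) + PowerSeries.C (R := K2) yv +
            PowerSeries.C (R := K2) (pv ^ 2 * yv) * PowerSeries.X) *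
          PowerSeries.rescale pv Gsym) =
      1 + PowerSeries.C (R := K2) (pv ^ 2 * yv) * PowerSeries.X *
        PowerSeries.rescale pv Gsym := by
  have hB0 : constantCoeff Bser ≠ 0 := constantCoeff_Bser ▸ one_ne_zero
  refine functional_equation_of_qDifference (B := Bser) ?_ rfl hB0 ?_
  · rw [Aser_eq_rogersRamanujanSeries]
    exact rogersRamanujanSeries_eq_rescale_sub pv_pow_succ_ne_one _
  · rw [Gsym, mul_assoc, PowerSeries.inv_mul_cancel _ hB0, mul_one]
end

section
/- For every n ≥ 0, the number of words w in the alphabet {U, D} containing exactly n letters U and such that every prefix of w contains at least as many U's as D's (ballot words with n U's) equals the Catalan number C_{n+1} = (1/(n+2))·binom(2(n+1), n+1). Equivalently, the number of symmetric Dyck paths whose total number of arches and half-arches is n equals the number of Dyck paths of size n+1. -/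
/-!
A ballot word `w` with `n` letters `U` and excess `e = #U - #D` closes up to the Dyck word
`w U Dᵉ⁺¹` of semilength `n + 1`. Conversely, cutting a nonempty Dyck word just before its last `U`
leaves a ballot word `w` followed by `U Dᵏ`, and counting letters forces `k = e + 1`. Hence ballot
words with `n` letters `U` are equinumerous with Dyck words of semilength `n + 1`, which are
counted by `catalan (n + 1)`; such words have length at most `2 * n`, so the sum over lengths
`L ≤ 2 * n` counts them all.
-/

attribute [local instance] Classical.propDecidable

/-- A word `w` (with `true = U`, `false = D`) satisfies the ballot condition: every
prefix contains at least as many `U`'s as `D`'s. -/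
def prefixCond (L : ℕ) (w : Fin L → Bool) : Prop :=
  ∀ m ∈ Finset.range (L + 1),
    (Finset.univ.filter (fun j : Fin L => (j : ℕ) < m ∧ w j = false)).card ≤
      (Finset.univ.filter (fun j : Fin L => (j : ℕ) < m ∧ w j = true)).card

open DyckStep List

def IsBallot (l : List DyckStep) : Prop :=
  ∀ i, (l.take i).count D ≤ (l.take i).count U

lemma DyckStep.count_U_add_count_D (l : List DyckStep) : l.count U + l.count D = l.length := by
  induction l with
  | nil => rfl
  | cons s l ih => cases s <;> grind

namespace IsBallot

variable {l : List DyckStep}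

lemma count_D_le (h : IsBallot l) : l.count D ≤ l.count U := by
  simpa using h l.length

lemma length_le (h : IsBallot l) : l.length ≤ 2 * l.count U := by
  have := count_U_add_count_D l
  have := h.count_D_le
  omega

lemma of_append {l' : List DyckStep} (h : IsBallot (l ++ l')) : IsBallot l := fun i => by
  rcases le_total i l.length with hi | hi
  · simpa [take_append_of_le_length hi] using h i
  · simpa [take_of_length_le hi] using h l.length

end IsBallot

lemma replicate_D_append_U_inj : ∀ {k₁ k₂ : ℕ} {a b : List DyckStep},
    replicate k₁ D ++ U :: a = replicate k₂ D ++ U :: b → a = b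
  | 0, 0, _, _, h => by simpa using h
  | _ + 1, _ + 1, _, _, h => replicate_D_append_U_inj (by simpa [replicate_succ] using h)
  | 0, _ + 1, _, _, h | _ + 1, 0, _, _, h => by simp [replicate_succ] at h

lemma append_U_replicate_D_inj {k₁ k₂ : ℕ} {a b : List DyckStep}
    (h : a ++ U :: replicate k₁ D = b ++ U :: replicate k₂ D) : a = b := by
  have := congrArg reverse h
  simp only [reverse_append, reverse_cons, reverse_replicate, append_assoc,
    singleton_append] at this
  exact reverse_injective (replicate_D_append_U_inj this)

lemma exists_eq_append_U_replicate_D {l : List DyckStep} (h : U ∈ l) :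
    ∃ q k, l = q ++ U :: replicate k D := by
  induction l with
  | nil => simp at h
  | cons s l ih =>
    by_cases hl : U ∈ l
    · obtain ⟨q, k, rfl⟩ := ih hl
      exact ⟨s :: q, k, rfl⟩
    · have hs : s = U := by simpa [hl, eq_comm] using h
      have hD : l = replicate l.length D := eq_replicate_iff.2
        ⟨rfl, fun b hb => (dichotomy b).resolve_left (by rintro rfl; exact hl hb)⟩
      exact ⟨[], l.length, by rw [hs, ← hD]; rfl⟩

namespace DyckWord

def ofBallot (l : List DyckStep) (h : IsBallot l) : DyckWord where
  toList := l ++ U :: replicate (l.count U - l.count D + 1) D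
  count_U_eq_count_D := by
    have := h.count_D_le
    grind
  count_D_le_count_U i := by
    rw [take_append]
    cases hj : i - l.length with
    | zero => simpa using h i
    | succ j =>
      rw [take_of_length_le (by omega)]
      have := h.count_D_le
      grind

@[simp]
lemma semilength_ofBallot (l : List DyckStep) (h : IsBallot l) :
    (ofBallot l h).semilength = l.count U + 1 := by
  simp [semilength, ofBallot, count_replicate]

lemma ofBallot_inj {l₁ l₂ : List DyckStep} {h₁ : IsBallot l₁} {h₂ : IsBallot l₂} :
    ofBallot l₁ h₁ = ofBallot l₂ h₂ ↔ l₁ = l₂ :=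
  ⟨fun h => append_U_replicate_D_inj (congrArg toList h), by rintro rfl; rfl⟩

lemma exists_ofBallot_eq (p : DyckWord) (hp : p ≠ 0) : ∃ l h, ofBallot l h = p := by
  have hU : U ∈ p.toList := by
    have hne := toList_ne_nil.2 hp
    simpa [head_eq_U] using head_mem hne
  obtain ⟨q, k, hq⟩ := exists_eq_append_U_replicate_D hU
  have hq_ballot : IsBallot q := IsBallot.of_append (l' := U :: replicate k D) fun i => by
    rw [← hq]; exact p.count_D_le_count_U i
  have hk : k = q.count U - q.count D + 1 := by
    have := p.count_U_eq_count_D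
    have := hq_ballot.count_D_le
    rw [hq] at *
    grind
  exact ⟨q, hq_ballot, DyckWord.ext (by rw [hq, hk]; rfl)⟩

end DyckWord

noncomputable def ballotEquivDyckWord (n : ℕ) :
    {l // IsBallot l ∧ l.count U = n} ≃ {p : DyckWord // p.semilength = n + 1} :=
  Equiv.ofBijective (fun l => ⟨.ofBallot l.1 l.2.1, by simp [l.2.2]⟩) <| by
    refine ⟨fun l₁ l₂ h => Subtype.ext <|
      (DyckWord.ofBallot_inj (h₁ := l₁.2.1) (h₂ := l₂.2.1)).1 (congrArg Subtype.val h), ?_⟩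
    rintro ⟨p, hp⟩
    obtain ⟨l, h, rfl⟩ := p.exists_ofBallot_eq (by rintro rfl; simp at hp)
    exact ⟨⟨l, h, by simpa using hp⟩, rfl⟩

theorem card_ballot_eq_catalan (n : ℕ) :
    Nat.card {l // IsBallot l ∧ l.count U = n} = catalan (n + 1) := by
  rw [Nat.card_congr (ballotEquivDyckWord n), Nat.card_eq_fintype_card,
    DyckWord.card_dyckWord_semilength_eq_catalan]

open Finset in
theorem sum_card_filter_ofFn_eq_natCard {α : Type*} [Fintype α] (P : List α → Prop) {N : ℕ}
    (hP : ∀ l, P l → l.length ≤ N) :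
    ∑ L ∈ range (N + 1), #{w : Fin L → α | P (ofFn w)} = Nat.card {l // P l} := by
  rw [← card_sigma, ← Nat.card_eq_finsetCard]
  refine Nat.card_congr (equivSigmaTuple.subtypeEquiv fun l => ?_).symm
  simpa [equivSigmaTuple] using hP l

lemma card_filter_lt_eq_count_take_ofFn {α : Type*} [DecidableEq α] {L : ℕ} (w : Fin L → α)
    (m : ℕ) (a : α) :
    (Finset.univ.filter fun j : Fin L => (j : ℕ) < m ∧ w j = a).card =
      ((ofFn w).take m).count a := by
  induction L generalizing m with
  | zero => simp
  | succ L ih =>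
    cases m with
    | zero => simp
    | succ m =>
      rw [Fin.card_filter_univ_succ', ofFn_succ, take_succ_cons, count_cons, ← ih]
      simp [add_comm]

lemma card_filter_eq_count_ofFn {α : Type*} [DecidableEq α] {L : ℕ} (w : Fin L → α) (a : α) :
    (Finset.univ.filter fun j : Fin L => w j = a).card = (ofFn w).count a := by
  simpa [take_of_length_le] using card_filter_lt_eq_count_take_ofFn w L a

def DyckStep.ofBool : Bool ≃ DyckStep where
  toFun b := cond b U D
  invFun | U => true | D => false
  left_inv b := by cases b <;> rfl
  right_inv s := by cases s <;> rfl

lemma DyckStep.count_map_ofBool (l : List Bool) (b : Bool) :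
    (l.map ofBool).count (ofBool b) = l.count b :=
  count_map_of_injective _ _ ofBool.injective _

lemma prefixCond_iff_isBallot (L : ℕ) (w : Fin L → Bool) :
    prefixCond L w ↔ IsBallot ((ofFn w).map ofBool) := by
  have hcount : ∀ i, ((ofFn w).take i).count false ≤ ((ofFn w).take i).count true ↔
      (((ofFn w).map ofBool).take i).count D ≤ (((ofFn w).map ofBool).take i).count U :=
    fun i => by rw [← map_take, ← count_map_ofBool, ← count_map_ofBool]; rfl
  simp only [prefixCond, IsBallot, card_filter_lt_eq_count_take_ofFn, Finset.mem_range, ← hcount]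
  refine ⟨fun h i => ?_, fun h m _ => h m⟩
  rcases le_total i L with hi | hi
  · exact h i (by omega)
  · have hL := h L (by omega)
    rwa [take_of_length_le (by simp), ← take_of_length_le (l := ofFn w) (by simpa using hi)] at hL

/-- the number of ballot words with exactly `n` `U`'s (any such word has
length at most `2n`) equals the Catalan number `C_{n+1}`. -/
theorem stmt_14 (n : ℕ) :
    (∑ L ∈ Finset.range (2 * n + 1),
      (Finset.univ.filter (fun w : Fin L → Bool =>
        prefixCond L w ∧
          (Finset.univ.filter (fun j => w j = true)).card = n)).card) =
      catalan (n + 1) := by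
  let P : List Bool → Prop := fun l => IsBallot (l.map ofBool) ∧ (l.map ofBool).count U = n
  have hword : ∀ L (w : Fin L → Bool),
      (prefixCond L w ∧ (Finset.univ.filter fun j => w j = true).card = n) ↔ P (ofFn w) :=
    fun L w => by rw [prefixCond_iff_isBallot, card_filter_eq_count_ofFn, ← count_map_ofBool]; rfl
  have hlen : ∀ l, P l → l.length ≤ 2 * n := fun l hl => by
    simpa [hl.2] using hl.1.length_le
  calc _ = Nat.card {l // P l} := by
        convert sum_card_filter_ofFn_eq_natCard P hlen using 4 with L - w
        exact hword L w
    _ = Nat.card {l // IsBallot l ∧ l.count U = n} :=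
        Nat.card_congr ((Equiv.listEquivOfEquiv ofBool).subtypeEquiv fun _ => Iff.rfl)
    _ = catalan (n + 1) := card_ballot_eq_catalan n
end

section
/- Fix integers k ≥ 1 and n ≥ 0. Then Σ_b p^{Σ_{i=1}^{n}(b_i − k(i−1))} = Σ_c p^{Σ_{i=1}^{n}(c_i − 1)}, where the left sum is over all weakly increasing integer sequences b_1 ≤ … ≤ b_n with k(i−1) ≤ b_i ≤ kn (encoding the (1,k)-Dyck paths of size n, with exponent the area between the path and the highest path (UD^k)^n), and the right sum is over all integer sequences (c_1,…,c_n) with c_0 := 1 and 1 ≤ c_i ≤ c_{i−1} + k for 1 ≤ i ≤ n (encoding the heaps of type II for (1,k)-Dyck paths of size n, with exponent the total number of empty boxes left of the pieces). In particular the bijection between (1,k)-Dyck paths and heaps of type II preserves the valuation. -/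
attribute [local instance] Classical.propDecidable

/-- The sequence of left abscissae of a heap of type II: `c_0 = 1` and `c_i` (for
`1 ≤ i ≤ m`) is given by the `i`-th entry of `c`. -/
def leftAbs (m N : ℕ) (c : Fin m → Fin N) : ℕ → ℕ
  | 0 => 1
  | i + 1 => if h : i < m then (c ⟨i, h⟩ : ℕ) else 0

lemma leftAbs_succ (m N : ℕ) (c : Fin m → Fin N) (i : ℕ) (h : i < m) :
    leftAbs m N c (i + 1) = (c ⟨i, h⟩ : ℕ) := by simp [leftAbs, h]

lemma heap_chain {n N k : ℕ} (c : Fin n → Fin N)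
    (hc : ∀ i ∈ Finset.Icc 1 n, 1 ≤ leftAbs n N c i ∧
      leftAbs n N c i ≤ leftAbs n N c (i - 1) + k) :
    ∀ a b : ℕ, a ≤ b → b ≤ n → leftAbs n N c b ≤ leftAbs n N c a + k * (b - a) := by
  intro a b
  induction b with
  | zero => intro hab _; interval_cases a; simp
  | succ b ih =>
    intro hab hbn
    rcases Nat.eq_or_lt_of_le hab with h | h
    · subst h; simp
    · have hab' : a ≤ b := by omega
      have h1 := (hc (b + 1) (by simp; omega)).2
      have h2 := ih (by omega) (by omega)
      rw [show b + 1 - 1 = b by omega] at h1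
      have h3 : k * (b + 1 - a) = k * (b - a) + k := by
        rw [show b + 1 - a = (b - a) + 1 by omega, Nat.mul_add, Nat.mul_one]
      omega

/-- The forward map, from Dyck paths to heaps. -/
def fwd (k n : ℕ) (b : Fin n → Fin (k * n + 1)) (j : Fin n) : Fin (k * n + 2) :=
  ⟨(b ⟨n - 1 - (j : ℕ), by have := j.isLt; omega⟩ : ℕ) - k * (n - 1 - (j : ℕ)) + 1, by
    have := (b ⟨n - 1 - (j : ℕ), by have := j.isLt; omega⟩).isLt; omega⟩

lemma fwd_val (k n : ℕ) (b : Fin n → Fin (k * n + 1)) (j : Fin n) (m : ℕ) (hm : m < n)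
    (e : n - 1 - (j : ℕ) = m) :
    (fwd k n b j : ℕ) = (b ⟨m, hm⟩ : ℕ) - k * m + 1 := by
  subst e; rfl

/-- The backward map, from heaps to Dyck paths. -/
def bwd (k n : ℕ) (c : Fin n → Fin (k * n + 2)) (i : Fin n) : Fin (k * n + 1) :=
  ⟨min (leftAbs n (k * n + 2) c (n - 1 - (i : ℕ) + 1) - 1 + k * (i : ℕ)) (k * n), by omega⟩

lemma bwd_val (k n : ℕ) (c : Fin n → Fin (k * n + 2))
    (hc : ∀ i ∈ Finset.Icc 1 n, 1 ≤ leftAbs n (k * n + 2) c i ∧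
      leftAbs n (k * n + 2) c i ≤ leftAbs n (k * n + 2) c (i - 1) + k)
    (i : Fin n) :
    (bwd k n c i : ℕ) = leftAbs n (k * n + 2) c (n - 1 - (i : ℕ) + 1) - 1 + k * (i : ℕ) := by
  have hlt := i.isLt
  have h2 := heap_chain c hc 0 (n - 1 - (i : ℕ) + 1) (by omega) (by omega)
  have h0 : leftAbs n (k * n + 2) c 0 = 1 := rfl
  have h3 : k * (n - 1 - (i : ℕ) + 1 - 0) + k * (i : ℕ) = k * n := by
    rw [← Nat.mul_add]; congr 1; omega
  show min (leftAbs n (k * n + 2) c (n - 1 - (i : ℕ) + 1) - 1 + k * (i : ℕ)) (k * n) = _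
  omega


lemma fwd_mem (k n : ℕ) (hk : 1 ≤ k) (b : Fin n → Fin (k * n + 1))
    (hmono : ∀ i j : Fin n, i ≤ j → b i ≤ b j)
    (hlow : ∀ i : Fin n, k * (i : ℕ) ≤ (b i : ℕ)) :
    ∀ i ∈ Finset.Icc 1 n, 1 ≤ leftAbs n (k * n + 2) (fwd k n b) i ∧
      leftAbs n (k * n + 2) (fwd k n b) i ≤ leftAbs n (k * n + 2) (fwd k n b) (i - 1) + k := by
  intro i hi
  rw [Finset.mem_Icc] at hi
  obtain ⟨j, rfl⟩ : ∃ j, i = j + 1 := ⟨i - 1, by omega⟩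
  have hjn : j < n := by omega
  rw [leftAbs_succ n (k * n + 2) _ j hjn,
    fwd_val k n b ⟨j, hjn⟩ (n - 1 - j) (by omega) rfl]
  constructor
  · omega
  · rcases j with _ | j'
    · have hlt := (b ⟨n - 1 - 0, by omega⟩).isLt
      have h0 : leftAbs n (k * n + 2) (fwd k n b) (0 + 1 - 1) = 1 := rfl
      have h3 : k * (n - 1 - 0) + k = k * n := by
        rw [← Nat.mul_succ]; congr 1; omega
      omega
    · rw [show j' + 1 + 1 - 1 = j' + 1 by omega,
        leftAbs_succ n (k * n + 2) _ j' (by omega),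
        fwd_val k n b ⟨j', by omega⟩ (n - 1 - j') (by omega) rfl]
      have hm : (b ⟨n - 1 - (j' + 1), by omega⟩ : ℕ) ≤ (b ⟨n - 1 - j', by omega⟩ : ℕ) :=
        hmono _ _ (by simp only [Fin.mk_le_mk]; omega)
      have hl := hlow ⟨n - 1 - j', by omega⟩
      simp only [Fin.val_mk] at hl
      have h3 : k * (n - 1 - j') = k * (n - 1 - (j' + 1)) + k := by
        rw [show n - 1 - j' = (n - 1 - (j' + 1)) + 1 by omega, Nat.mul_succ]
      omega

/-- as polynomials in `p` (here `Polynomial.X` over `ℕ`),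
`Σ_b p^{Σ_i (b_i - k(i-1))} = Σ_c p^{Σ_i (c_i - 1)}`, where the left sum is over the
weakly increasing sequences `b_1 ≤ … ≤ b_n` with `k(i-1) ≤ b_i ≤ kn` (the `(1,k)`-Dyck
paths of size `n` with the area statistic; `b` is 0-indexed below) and the right sum is
over the sequences `(c_1,…,c_n)` with `c_0 := 1` and `1 ≤ c_i ≤ c_{i-1} + k` (the
heaps of type II for `(1,k)`-Dyck paths of size `n` with the empty-box statistic). -/
theorem stmt_16 (k n : ℕ) (hk : 1 ≤ k) :
    (∑ b ∈ Finset.univ.filter (fun b : Fin n → Fin (k * n + 1) =>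
        (∀ i j : Fin n, i ≤ j → b i ≤ b j) ∧ ∀ i : Fin n, k * (i : ℕ) ≤ (b i : ℕ)),
      (Polynomial.X : Polynomial ℕ) ^ (∑ i : Fin n, ((b i : ℕ) - k * (i : ℕ)))) =
    ∑ c ∈ Finset.univ.filter (fun c : Fin n → Fin (k * n + 2) =>
        ∀ i ∈ Finset.Icc 1 n,
          1 ≤ leftAbs n (k * n + 2) c i ∧
            leftAbs n (k * n + 2) c i ≤ leftAbs n (k * n + 2) c (i - 1) + k),
      (Polynomial.X : Polynomial ℕ) ^ (∑ i ∈ Finset.Icc 1 n, (leftAbs n (k * n + 2) c i - 1)) := by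
  refine Finset.sum_bij' (fun b _ => fwd k n b) (fun c _ => bwd k n c) ?_ ?_ ?_ ?_ ?_
  · -- fwd lands in heaps
    intro b hb
    simp only [Finset.mem_filter, Finset.mem_univ, true_and] at hb ⊢
    exact fwd_mem k n hk b hb.1 hb.2
  · -- bwd lands in Dyck paths
    intro c hc
    simp only [Finset.mem_filter, Finset.mem_univ, true_and] at hc ⊢
    constructor
    · intro i j hij
      rw [Fin.le_def, bwd_val k n c hc, bwd_val k n c hc]
      have hii := i.isLt
      have hjj := j.isLt
      have hij' : (i : ℕ) ≤ (j : ℕ) := hij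
      have h2 := heap_chain c hc (n - 1 - (j : ℕ) + 1) (n - 1 - (i : ℕ) + 1)
        (by omega) (by omega)
      have h1 := (hc (n - 1 - (j : ℕ) + 1) (by rw [Finset.mem_Icc]; omega)).1
      have h3 : k * (n - 1 - (i : ℕ) + 1 - (n - 1 - (j : ℕ) + 1)) + k * (i : ℕ)
          = k * (j : ℕ) := by
        rw [← Nat.mul_add]; congr 1; omega
      omega
    · intro i
      rw [bwd_val k n c hc]
      omega
  · -- left inverse
    intro b hb
    simp only [Finset.mem_filter, Finset.mem_univ, true_and] at hb
    have hfwd := fwd_mem k n hk b hb.1 hb.2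
    funext i
    apply Fin.ext
    have hii := i.isLt
    rw [bwd_val k n _ hfwd, leftAbs_succ n (k * n + 2) _ (n - 1 - (i : ℕ)) (by omega),
      fwd_val k n b ⟨n - 1 - (i : ℕ), by omega⟩ (i : ℕ) hii
        (by show n - 1 - (n - 1 - (i : ℕ)) = (i : ℕ); omega)]
    have hl := hb.2 i
    have he : (b ⟨(i : ℕ), hii⟩ : ℕ) = (b i : ℕ) := by rw [Fin.eta]
    omega
  · -- right inverse
    intro c hc
    simp only [Finset.mem_filter, Finset.mem_univ, true_and] at hc
    funext j
    apply Fin.ext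
    have hjj := j.isLt
    rw [fwd_val k n _ j (n - 1 - (j : ℕ)) (by omega) rfl, bwd_val k n c hc]
    rw [show n - 1 - ((⟨n - 1 - (j : ℕ), by omega⟩ : Fin n) : ℕ) + 1 = (j : ℕ) + 1
        from by show n - 1 - (n - 1 - (j : ℕ)) + 1 = (j : ℕ) + 1; omega]
    rw [leftAbs_succ n (k * n + 2) c _ hjj]
    have h1 := (hc ((j : ℕ) + 1) (by rw [Finset.mem_Icc]; omega)).1
    rw [leftAbs_succ n (k * n + 2) c _ hjj] at h1
    have he : (c ⟨(j : ℕ), hjj⟩ : ℕ) = (c j : ℕ) := by rw [Fin.eta]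
    rw [show ((⟨n - 1 - (j : ℕ), by omega⟩ : Fin n) : ℕ) = n - 1 - (j : ℕ) from rfl]
    omega
  · -- the statistic is preserved
    intro b hb
    simp only [Finset.mem_filter, Finset.mem_univ, true_and] at hb
    congr 1
    set g : ℕ → ℕ := fun m => if h : m < n then (b ⟨m, h⟩ : ℕ) - k * m else 0 with hg
    have key : ∀ i ∈ Finset.Icc 1 n,
        leftAbs n (k * n + 2) (fwd k n b) i - 1 = g (n - i) := by
      intro i hi
      rw [Finset.mem_Icc] at hi
      obtain ⟨j, rfl⟩ : ∃ j, i = j + 1 := ⟨i - 1, by omega⟩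
      have hjn : j < n := by omega
      rw [leftAbs_succ n (k * n + 2) _ j hjn,
        fwd_val k n b ⟨j, hjn⟩ (n - 1 - j) (by omega) rfl]
      rw [hg]
      simp only
      rw [show n - (j + 1) = n - 1 - j by omega, dif_pos (show n - 1 - j < n by omega)]
      omega
    have lhs_eq : (∑ i : Fin n, ((b i : ℕ) - k * (i : ℕ))) = ∑ i : Fin n, g (i : ℕ) := by
      refine Finset.sum_congr rfl fun i _ => ?_
      rw [hg]
      simp only
      rw [dif_pos i.isLt]
    have step2 : ∑ i ∈ Finset.Icc 1 n, g (n - i) = ∑ m ∈ Finset.range n, g m := by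
      refine Finset.sum_nbij' (fun i => n - i) (fun m => n - m) ?_ ?_ ?_ ?_ ?_
      · intro a ha; simp only [Finset.mem_Icc] at ha; simp only [Finset.mem_range]; omega
      · intro a ha; simp only [Finset.mem_range] at ha; simp only [Finset.mem_Icc]; omega
      · intro a ha; simp only [Finset.mem_Icc] at ha; omega
      · intro a ha; simp only [Finset.mem_range] at ha; omega
      · intro a _; rfl
    rw [Finset.sum_congr rfl key, step2, lhs_eq, Fin.sum_univ_eq_sum_range g]
end
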